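/- Let n ≥ 3 and s > (n-1)/2. For x, y ∈ S^{n-1} with x ≠ y, let K_{-s}(x·y) = (4/(n-2))^{s-1/2} (Γ(s+1/2)/Γ(2s)) ∫_0^∞ e^{-t(n-2)/2} (P_{e^{-t}}(x·y) − 1/ω_{n-1}) I_{s-1/2}((n-2)t/2) t^{s-1/2} dt. Then there exists a constant c depending only on n and s such that |K_{-s}(x·y)| ≤ c for all x, y ∈ S^{n-1} with x ≠ y. -/

import Mathlib

open MeasureTheory

/-- The surface area `ω_{n-1} = 2π^{n/2}/Γ(n/2)` of the unit sphere `S^{n-1} ⊂ ℝ^n`. -/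
noncomputable def omegaSphere (n : ℕ) : ℝ :=
  2 * Real.pi ^ ((n : ℝ) / 2) / Real.Gamma ((n : ℝ) / 2)

/-- The Poisson kernel for the unit ball in `ℝ^n`:
`P_r(τ) = (1 - r²)/(ω_{n-1}(1 - 2rτ + r²)^{n/2})`. -/
noncomputable def spherePoissonKernel (n : ℕ) (r τ : ℝ) : ℝ :=
  (1 - r ^ 2) / (omegaSphere n * (1 - 2 * r * τ + r ^ 2) ^ ((n : ℝ) / 2))

/-- The modified Bessel function of the first kind,
`I_ρ(z) = ∑_{m=0}^∞ (z/2)^(2m+ρ)/(Γ(m+1)Γ(m+ρ+1))`. -/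
noncomputable def besselI (ρ z : ℝ) : ℝ :=
  ∑' m : ℕ, (z / 2) ^ (2 * (m : ℝ) + ρ) /
    (Real.Gamma ((m : ℝ) + 1) * Real.Gamma ((m : ℝ) + ρ + 1))

/-!
The integrand is dominated, uniformly in `τ = x · y ∈ [-1, 1]`, by an integrable function of `t`.
Since `(1 - r)^n ≤ (1 - 2rτ + r²)^(n/2) ≤ (1 + r)^n`, Bernoulli's inequality gives
`|P_r(τ) - 1/ω_{n-1}| ≤ n r / (ω_{n-1} (1 - r)^(n-1))`; comparing the Bessel series termwise with
`(z/2)^ρ/Γ(ρ+1) · ((z/2)^m/m!)²` gives `I_ρ(z) ≤ (z/2)^ρ e^z / Γ(ρ+1)`, whose factor `e^z` cancels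
the weight `e^(-t(n-2)/2)`. With `r = e^(-t)` and `1 - r ≥ t/(1+t)` the integrand is then
`O(e^(-t) (t^(2s-n) + t^(2s-1)))`, which is integrable on `(0, ∞)` because `2s - n > -1`.
-/

open Real Set
open scoped Nat

lemma factorial_mul_Gamma_add_one_le {ρ : ℝ} (hρ : 0 ≤ ρ) (m : ℕ) :
    m ! * Gamma (ρ + 1) ≤ Gamma (m + ρ + 1) := by
  induction m with
  | zero => simp
  | succ k ih =>
    have hk : 0 < (k : ℝ) + ρ + 1 := by positivity
    rw [Nat.factorial_succ, Nat.cast_mul, Nat.cast_succ, mul_assoc,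
      show (k : ℝ) + 1 + ρ + 1 = (k + ρ + 1) + 1 by ring, Gamma_add_one hk.ne']
    exact mul_le_mul (by linarith) ih (by positivity) hk.le

lemma besselI_term_nonneg {ρ w : ℝ} (hρ : 0 ≤ ρ) (hw : 0 < w) (m : ℕ) :
    0 ≤ w ^ (2 * (m : ℝ) + ρ) / (Gamma (m + 1) * Gamma (m + ρ + 1)) := by
  have := Gamma_pos_of_pos (by positivity : 0 < (m : ℝ) + 1)
  have := Gamma_pos_of_pos (by positivity : 0 < (m : ℝ) + ρ + 1)
  positivity

lemma besselI_nonneg {ρ z : ℝ} (hρ : 0 ≤ ρ) (hz : 0 < z) : 0 ≤ besselI ρ z :=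
  tsum_nonneg (besselI_term_nonneg hρ (by positivity))

lemma besselI_term_le {ρ w : ℝ} (hρ : 0 ≤ ρ) (hw : 0 < w) (m : ℕ) :
    w ^ (2 * (m : ℝ) + ρ) / (Gamma (m + 1) * Gamma (m + ρ + 1)) ≤
      w ^ ρ / Gamma (ρ + 1) * (w ^ m / m !) ^ 2 := by
  have hΓ := Gamma_pos_of_pos (by positivity : 0 < ρ + 1)
  rw [rpow_add hw, mul_comm (2 : ℝ), rpow_mul hw.le, rpow_natCast, rpow_two,
    Gamma_nat_eq_factorial, div_pow, div_mul_div_comm, mul_comm (w ^ ρ)]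
  apply div_le_div_of_nonneg_left (by positivity) (by positivity)
  calc Gamma (ρ + 1) * (m ! : ℝ) ^ 2 = m ! * (m ! * Gamma (ρ + 1)) := by ring
    _ ≤ m ! * Gamma (m + ρ + 1) := by gcongr; exact factorial_mul_Gamma_add_one_le hρ m

lemma besselI_le {ρ z : ℝ} (hρ : 0 ≤ ρ) (hz : 0 < z) :
    besselI ρ z ≤ (z / 2) ^ ρ * exp z / Gamma (ρ + 1) := by
  set w := z / 2
  have hw : 0 < w := by positivity
  have hexp : HasSum (fun m : ℕ => w ^ m / m !) (exp w) := by
    rw [exp_eq_exp_ℝ]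
    exact NormedSpace.expSeries_div_hasSum_exp w
  have hdom : HasSum (fun m : ℕ => w ^ ρ / Gamma (ρ + 1) * (w ^ m / m ! * exp w))
      (w ^ ρ / Gamma (ρ + 1) * (exp w * exp w)) := (hexp.mul_right _).mul_left _
  have hle : ∀ m : ℕ, w ^ (2 * (m : ℝ) + ρ) / (Gamma (m + 1) * Gamma (m + ρ + 1)) ≤
      w ^ ρ / Gamma (ρ + 1) * (w ^ m / m ! * exp w) := fun m => by
    refine (besselI_term_le hρ hw m).trans ?_
    have := Gamma_pos_of_pos (by positivity : 0 < ρ + 1)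
    rw [sq]
    gcongr
    exact pow_div_factorial_le_exp _ hw.le m
  have hsum : Summable fun m : ℕ =>
      w ^ (2 * (m : ℝ) + ρ) / (Gamma (m + 1) * Gamma (m + ρ + 1)) :=
    .of_nonneg_of_le (besselI_term_nonneg hρ hw) hle hdom.summable
  calc besselI ρ z ≤ ∑' m : ℕ, w ^ ρ / Gamma (ρ + 1) * (w ^ m / m ! * exp w) :=
        hsum.tsum_le_tsum hle hdom.summable
    _ = w ^ ρ / Gamma (ρ + 1) * (exp w * exp w) := hdom.tsum_eq
    _ = (z / 2) ^ ρ * exp z / Gamma (ρ + 1) := by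
      rw [← exp_add, add_halves]; ring

lemma abs_one_sub_sq_div_pow_sub_one_le {n : ℕ} (hn : 1 ≤ n) {r q : ℝ} (hr0 : 0 ≤ r)
    (hr1 : r < 1) (hq : 1 - r ≤ q) (hq' : q ≤ 1 + r) :
    |(1 - r ^ 2) / q ^ n - 1| ≤ n * r / (1 - r) ^ (n - 1) := by
  obtain ⟨k, rfl⟩ : ∃ k, n = k + 1 := ⟨n - 1, by omega⟩
  rw [Nat.add_sub_cancel]
  set a := 1 - r
  have ha : 0 < a := by linarith
  have hq0 : 0 < q := by linarith
  have hak : 0 < a ^ k := by positivity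
  have hak1 : a ^ k ≤ 1 := pow_le_one₀ ha.le (by linarith)
  have hbernoulli : ∀ j : ℕ, 1 - j * r ≤ a ^ j := fun j => by
    simpa [a, sub_eq_add_neg] using one_add_mul_le_pow (by linarith : (-2 : ℝ) ≤ -r) j
  have hupper : (1 - r ^ 2) / q ^ (k + 1) ≤ (1 + r) / a ^ k := by
    rw [show 1 - r ^ 2 = (1 + r) * a by ring, show (1 + r) / a ^ k = (1 + r) * a / a ^ (k + 1) by
      rw [pow_succ, mul_div_mul_right _ _ ha.ne']]
    gcongr
  have hlower : a ^ (k + 1) ≤ (1 - r ^ 2) / q ^ (k + 1) := by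
    rw [le_div_iff₀ (by positivity)]
    calc a ^ (k + 1) * q ^ (k + 1) ≤ a ^ (k + 1) * (1 + r) ^ (k + 1) := by gcongr
      _ = (1 - r ^ 2) ^ (k + 1) := by rw [← mul_pow]; ring
      _ ≤ 1 - r ^ 2 := pow_le_of_le_one (by nlinarith) (by nlinarith) (by omega)
  rw [abs_sub_le_iff]
  constructor
  · calc (1 - r ^ 2) / q ^ (k + 1) - 1 ≤ (1 + r) / a ^ k - 1 := by linarith
      _ = (1 + r - a ^ k) / a ^ k := by field_simp
      _ ≤ ((k + 1 : ℕ) : ℝ) * r / a ^ k := by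
          gcongr
          have := hbernoulli k
          push_cast
          linarith
  · calc 1 - (1 - r ^ 2) / q ^ (k + 1) ≤ ((k + 1 : ℕ) : ℝ) * r := by
          linarith [hbernoulli (k + 1)]
      _ ≤ ((k + 1 : ℕ) : ℝ) * r / a ^ k := le_div_self (by positivity) hak hak1

lemma omegaSphere_pos {n : ℕ} (hn : 0 < n) : 0 < omegaSphere n := by
  have := Gamma_pos_of_pos (by positivity : 0 < (n : ℝ) / 2)
  unfold omegaSphere
  positivity

lemma abs_spherePoissonKernel_sub_le {n : ℕ} (hn : 1 ≤ n) {r τ : ℝ} (hr0 : 0 ≤ r)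
    (hr1 : r < 1) (hτ : |τ| ≤ 1) :
    |spherePoissonKernel n r τ - 1 / omegaSphere n| ≤
      n * r / (omegaSphere n * (1 - r) ^ (n - 1)) := by
  have hω := omegaSphere_pos (by omega : 0 < n)
  obtain ⟨hτ₁, hτ₂⟩ := abs_le.mp hτ
  set Q := 1 - 2 * r * τ + r ^ 2
  have hQ₁ : (1 - r) ^ 2 ≤ Q := by nlinarith
  have hQ₂ : Q ≤ (1 + r) ^ 2 := by nlinarith
  have hQ : Q ^ ((n : ℝ) / 2) = √Q ^ n := by
    rw [sqrt_eq_rpow, ← rpow_natCast, ← rpow_mul (by nlinarith)]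
    ring_nf
  have hsqrt₁ : 1 - r ≤ √Q :=
    (sqrt_sq (by linarith)).symm.le.trans (sqrt_le_sqrt hQ₁)
  have hsqrt₂ : √Q ≤ 1 + r :=
    (sqrt_le_sqrt hQ₂).trans (sqrt_sq (by linarith)).le
  have hP : spherePoissonKernel n r τ - 1 / omegaSphere n =
      ((1 - r ^ 2) / √Q ^ n - 1) / omegaSphere n := by
    rw [spherePoissonKernel, hQ]
    field_simp
  rw [hP, abs_div, abs_of_pos hω, mul_comm (omegaSphere n), ← div_div]
  gcongr
  exact abs_one_sub_sq_div_pow_sub_one_le hn hr0 hr1 hsqrt₁ hsqrt₂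

lemma one_sub_exp_neg_inv_le {t : ℝ} (ht : 0 < t) : (1 - exp (-t))⁻¹ ≤ 1 + t⁻¹ := by
  have hexp : exp (-t) ≤ (1 + t)⁻¹ := by
    rw [exp_neg]
    exact inv_anti₀ (by positivity) (by linarith [add_one_le_exp t])
  have hfrac : t / (1 + t) = 1 - (1 + t)⁻¹ := by field_simp; ring
  calc (1 - exp (-t))⁻¹ ≤ (t / (1 + t))⁻¹ := inv_anti₀ (by positivity) (by linarith)
    _ = 1 + t⁻¹ := by field_simp; ring

lemma exp_neg_div_one_sub_exp_neg_pow_mul_rpow_le {t : ℝ} (ht : 0 < t) (a : ℝ) (k : ℕ) :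
    exp (-t) / (1 - exp (-t)) ^ k * t ^ a ≤
      2 ^ k * (exp (-t) * t ^ (a - k) + exp (-t) * t ^ a) := by
  have hpos : 0 < 1 - exp (-t) := sub_pos.mpr (exp_lt_one_iff.mpr (by linarith))
  have hinv : ((1 - exp (-t)) ^ k)⁻¹ ≤ 2 ^ k * (t ^ (-(k : ℝ)) + 1) := by
    rw [← inv_pow]
    calc ((1 - exp (-t))⁻¹) ^ k ≤ (1 + t⁻¹) ^ k :=
          pow_le_pow_left₀ (by positivity) (one_sub_exp_neg_inv_le ht) k
      _ ≤ 2 ^ (k - 1) * (1 ^ k + t⁻¹ ^ k) := add_pow_le zero_le_one (by positivity) k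
      _ ≤ 2 ^ k * (t ^ (-(k : ℝ)) + 1) := by
          rw [one_pow, add_comm, inv_pow, rpow_neg ht.le, rpow_natCast]
          gcongr
          · exact one_le_two
          · exact k.sub_le 1
  calc exp (-t) / (1 - exp (-t)) ^ k * t ^ a = exp (-t) * t ^ a * ((1 - exp (-t)) ^ k)⁻¹ := by
        ring
    _ ≤ exp (-t) * t ^ a * (2 ^ k * (t ^ (-(k : ℝ)) + 1)) := by gcongr
    _ = 2 ^ k * (exp (-t) * t ^ (a - k) + exp (-t) * t ^ a) := by
        rw [rpow_sub ht, rpow_neg ht.le]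
        ring

lemma integrableOn_exp_neg_mul_rpow {a : ℝ} (ha : -1 < a) :
    IntegrableOn (fun t => exp (-t) * t ^ a) (Ioi 0) := by
  simpa using GammaIntegral_convergent (by linarith : 0 < a + 1)

/-- The integrand of the integral representation of `K_{-s}(τ)`, without the constant prefactor. -/
noncomputable def negPowKernelIntegrand (n : ℕ) (s τ t : ℝ) : ℝ :=
  exp (-(t * ((n : ℝ) - 2) / 2)) * (spherePoissonKernel n (exp (-t)) τ - 1 / omegaSphere n) *
    besselI (s - 1/2) (((n : ℝ) - 2) * t / 2) * t ^ (s - 1/2)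

lemma abs_negPowKernelIntegrand_le {n : ℕ} (hn : 3 ≤ n) {s τ t : ℝ} (hs : 1 / 2 ≤ s)
    (hτ : |τ| ≤ 1) (ht : 0 < t) :
    |negPowKernelIntegrand n s τ t| ≤
      n * (((n : ℝ) - 2) / 4) ^ (s - 1/2) / (omegaSphere n * Gamma (s + 1/2)) *
        (exp (-t) / (1 - exp (-t)) ^ (n - 1) * t ^ (2 * s - 1)) := by
  have hn' : (3 : ℝ) ≤ n := by exact_mod_cast hn
  have hz : 0 < ((n : ℝ) - 2) * t / 2 := by nlinarith
  have hρ : 0 ≤ s - 1/2 := by linarith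
  have hbessel := besselI_le hρ hz
  have hbessel₀ := besselI_nonneg hρ hz
  have hpoisson := abs_spherePoissonKernel_sub_le (by omega : 1 ≤ n) (exp_pos (-t)).le
    (exp_lt_one_iff.mpr (by linarith)) hτ
  have hω := omegaSphere_pos (by omega : 0 < n)
  have hpos : 0 < 1 - exp (-t) := sub_pos.mpr (exp_lt_one_iff.mpr (by linarith))
  rw [show s - 1/2 + 1 = s + 1/2 by ring] at hbessel
  rw [negPowKernelIntegrand, abs_mul, abs_mul, abs_mul, abs_of_pos (exp_pos _),
    abs_of_nonneg hbessel₀, abs_of_nonneg (rpow_nonneg ht.le _)]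
  calc _ ≤ exp (-(t * ((n : ℝ) - 2) / 2)) *
        (n * exp (-t) / (omegaSphere n * (1 - exp (-t)) ^ (n - 1))) *
        ((((n : ℝ) - 2) * t / 2 / 2) ^ (s - 1/2) * exp (((n : ℝ) - 2) * t / 2) /
          Gamma (s + 1/2)) * t ^ (s - 1/2) := by gcongr
    _ = _ := by
      rw [show ((n : ℝ) - 2) * t / 2 / 2 = ((n : ℝ) - 2) / 4 * t by ring,
        mul_rpow (by linarith) ht.le, show 2 * s - 1 = (s - 1/2) + (s - 1/2) by ring,
        rpow_add ht, exp_neg, show ((n : ℝ) - 2) * t / 2 = t * ((n : ℝ) - 2) / 2 by ring]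
      field_simp

lemma exists_abs_integral_negPowKernelIntegrand_le {n : ℕ} (hn : 3 ≤ n) {s : ℝ}
    (hs : ((n : ℝ) - 1) / 2 < s) :
    ∃ C, ∀ τ, |τ| ≤ 1 → |∫ t in Ioi 0, negPowKernelIntegrand n s τ t| ≤ C := by
  have hn' : (3 : ℝ) ≤ n := by exact_mod_cast hn
  have hω := omegaSphere_pos (by omega : 0 < n)
  have hΓ := Gamma_pos_of_pos (by linarith : 0 < s + 1/2)
  have hk : ((n - 1 : ℕ) : ℝ) = n - 1 := by rw [Nat.cast_sub (by omega), Nat.cast_one]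
  set K := n * (((n : ℝ) - 2) / 4) ^ (s - 1/2) / (omegaSphere n * Gamma (s + 1/2))
  have hK : 0 ≤ K := by
    have := rpow_pos_of_pos (by linarith : (0 : ℝ) < ((n : ℝ) - 2) / 4) (s - 1/2)
    positivity
  set g : ℝ → ℝ := fun t => K * (2 ^ (n - 1) *
    (exp (-t) * t ^ (2 * s - 1 - (n - 1 : ℕ)) + exp (-t) * t ^ (2 * s - 1)))
  have hg : IntegrableOn g (Ioi 0) :=
    (((integrableOn_exp_neg_mul_rpow (by rw [hk]; linarith)).add
      (integrableOn_exp_neg_mul_rpow (by linarith))).const_mul _).const_mul _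
  refine ⟨∫ t in Ioi 0, g t, fun τ hτ => ?_⟩
  rw [← Real.norm_eq_abs]
  refine norm_integral_le_of_norm_le hg <|
    (ae_restrict_iff' measurableSet_Ioi).mpr (.of_forall fun t (ht : 0 < t) => ?_)
  calc ‖negPowKernelIntegrand n s τ t‖
      ≤ K * (exp (-t) / (1 - exp (-t)) ^ (n - 1) * t ^ (2 * s - 1)) :=
        abs_negPowKernelIntegrand_le hn (by linarith) hτ ht
    _ ≤ g t := mul_le_mul_of_nonneg_left (exp_neg_div_one_sub_exp_neg_pow_mul_rpow_le ht _ _) hK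

theorem stmt12 (n : ℕ) (hn : 3 ≤ n) (s : ℝ) (hs : ((n : ℝ) - 1) / 2 < s) :
    ∃ c : ℝ, ∀ x y : EuclideanSpace ℝ (Fin n),
      x ∈ Metric.sphere (0 : EuclideanSpace ℝ (Fin n)) 1 →
      y ∈ Metric.sphere (0 : EuclideanSpace ℝ (Fin n)) 1 → x ≠ y →
      |(4 / ((n : ℝ) - 2)) ^ (s - 1/2) * (Real.Gamma (s + 1/2) / Real.Gamma (2 * s)) *
          ∫ t in Set.Ioi (0 : ℝ),
            Real.exp (-(t * ((n : ℝ) - 2) / 2)) *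
              (spherePoissonKernel n (Real.exp (-t)) (inner ℝ x y : ℝ) - 1 / omegaSphere n) *
              besselI (s - 1/2) (((n : ℝ) - 2) * t / 2) * t ^ (s - 1/2)| ≤ c := by
  obtain ⟨C, hC⟩ := exists_abs_integral_negPowKernelIntegrand_le hn hs
  refine ⟨|(4 / ((n : ℝ) - 2)) ^ (s - 1/2) * (Gamma (s + 1/2) / Gamma (2 * s))| * C,
    fun x y hx hy _ => ?_⟩
  have hinner : |inner ℝ x y| ≤ 1 := by
    simpa [mem_sphere_zero_iff_norm.mp hx, mem_sphere_zero_iff_norm.mp hy] using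
      abs_real_inner_le_norm x y
  rw [abs_mul]
  exact mul_le_mul_of_nonneg_left (hC _ hinner) (abs_nonneg _)
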